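/- For α > 0, κ ≥ 0, γ > 0 and j ≥ 1, the Poisson rate for new dishes γ B(α+1, κ+j)/B(α, κ+1) is strictly decreasing in j and tends to 0 as j → ∞, and the total ∑_{j=1}^∞ γ B(α+1, κ+j)/B(α, κ+1) = γ. -/

import Mathlib

open MeasureTheory ProbabilityTheory Real Filter Topology

noncomputable def betaFn (a b : ℝ) : ℝ := Real.Gamma a * Real.Gamma b / Real.Gamma (a + b)

lemma betaFn_pos {a b : ℝ} (ha : 0 < a) (hb : 0 < b) : 0 < betaFn a b :=
  div_pos (mul_pos (Real.Gamma_pos_of_pos ha) (Real.Gamma_pos_of_pos hb))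
    (Real.Gamma_pos_of_pos (by linarith))

lemma betaFn_rec {a x : ℝ} (ha : 0 < a) (hx : 0 < x) :
    betaFn a (x + 1) = x / (a + x) * betaFn a x := by
  have hax : (0:ℝ) < a + x := by linarith
  have hG : Real.Gamma (a + x) ≠ 0 := (Real.Gamma_pos_of_pos hax).ne'
  unfold betaFn
  rw [Real.Gamma_add_one hx.ne', show a + (x + 1) = (a + x) + 1 by ring,
    Real.Gamma_add_one hax.ne']
  field_simp

lemma betaFn_split {a x : ℝ} (ha : 0 < a) (hx : 0 < x) :
    betaFn (a + 1) x = betaFn a x - betaFn a (x + 1) := by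
  have hax : (0:ℝ) < a + x := by linarith
  have hG : Real.Gamma (a + x) ≠ 0 := (Real.Gamma_pos_of_pos hax).ne'
  unfold betaFn
  rw [Real.Gamma_add_one ha.ne', show a + (x + 1) = (a + x) + 1 by ring,
    Real.Gamma_add_one hx.ne', show a + 1 + x = (a + x) + 1 by ring,
    Real.Gamma_add_one hax.ne']
  field_simp
  ring

lemma betaFn_step_lt {a x : ℝ} (ha : 0 < a) (hx : 0 < x) :
    betaFn a (x + 1) < betaFn a x := by
  rw [betaFn_rec ha hx]
  have h1 : x / (a + x) < 1 := (div_lt_one (by linarith)).mpr (by linarith)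
  have h2 : 0 < betaFn a x := betaFn_pos ha hx
  nlinarith

lemma gamma_convex_bound {β x : ℝ} (hβ0 : 0 < β) (hβ1 : β ≤ 1) (hx : 2 ≤ x) :
    Real.Gamma x * (x + β - 1) ^ β ≤ Real.Gamma (x + β) := by
  have ha : (0:ℝ) < x + β - 1 := by linarith
  have hb : (0:ℝ) < x + β := by linarith
  have hx0 : (0:ℝ) < x := by linarith
  have h := Real.convexOn_log_Gamma.2 (Set.mem_Ioi.mpr ha) (Set.mem_Ioi.mpr hb)
    hβ0.le (by linarith : (0:ℝ) ≤ 1 - β) (by ring)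
  have hxeq : β • (x + β - 1) + (1 - β) • (x + β) = x := by
    simp only [smul_eq_mul]; ring
  rw [hxeq] at h
  simp only [Function.comp_apply, smul_eq_mul] at h
  have hGa : Real.Gamma (x + β - 1) = Real.Gamma (x + β) / (x + β - 1) := by
    rw [show x + β = (x + β - 1) + 1 by ring, Real.Gamma_add_one ha.ne']
    rw [add_sub_cancel_right, mul_div_cancel_left₀ _ ha.ne']
  rw [hGa, Real.log_div (Real.Gamma_pos_of_pos hb).ne' ha.ne'] at h
  have h2 : Real.log (Real.Gamma x) + β * Real.log (x + β - 1) ≤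
      Real.log (Real.Gamma (x + β)) := by linarith
  calc Real.Gamma x * (x + β - 1) ^ β
      = Real.exp (Real.log (Real.Gamma x) + β * Real.log (x + β - 1)) := by
        rw [Real.exp_add, Real.exp_log (Real.Gamma_pos_of_pos hx0),
          Real.rpow_def_of_pos ha, mul_comm β]
    _ ≤ Real.exp (Real.log (Real.Gamma (x + β))) := Real.exp_le_exp.mpr h2
    _ = Real.Gamma (x + β) := Real.exp_log (Real.Gamma_pos_of_pos hb)

set_option maxHeartbeats 1000000 in
lemma beta_tendsto_zero {a κ : ℝ} (ha : 0 < a) (hκ : 0 ≤ κ) :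
    Tendsto (fun n : ℕ => betaFn a (κ + n)) atTop (𝓝 0) := by
  set β := min a 1 with hβ
  have hβ0 : 0 < β := lt_min ha one_pos
  have hβ1 : β ≤ 1 := min_le_right _ _
  have hβa : β ≤ a := min_le_left _ _
  have hupper : Tendsto (fun n : ℕ => Real.Gamma a * ((κ + n + β - 1) ^ β)⁻¹)
      atTop (𝓝 0) := by
    have h1 : Tendsto (fun n : ℕ => κ + n + β - 1) atTop atTop := by
      have h0 : Tendsto (fun n : ℕ => (n : ℝ) + (κ + β - 1)) atTop atTop :=
        tendsto_atTop_add_const_right atTop (κ + β - 1) tendsto_natCast_atTop_atTop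
      exact h0.congr (fun n => by ring)
    have h2 : Tendsto (fun n : ℕ => (κ + n + β - 1) ^ β) atTop atTop :=
      (tendsto_rpow_atTop hβ0).comp h1
    have := h2.inv_tendsto_atTop.const_mul (Real.Gamma a)
    simpa using this
  apply tendsto_of_tendsto_of_tendsto_of_le_of_le' tendsto_const_nhds hupper
  · filter_upwards [eventually_ge_atTop 1] with n hn
    have : (0:ℝ) < κ + n := by
      have : (1:ℝ) ≤ (n:ℝ) := by exact_mod_cast hn
      linarith
    exact (betaFn_pos ha this).le
  · filter_upwards [eventually_ge_atTop 2] with n hn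
    have hn2 : (2:ℝ) ≤ (n:ℝ) := by exact_mod_cast hn
    set y : ℝ := κ + n with hy
    have hy2 : 2 ≤ y := by simp only [hy]; linarith
    have hy0 : 0 < y := by linarith
    have hyb1 : (0:ℝ) < y + β - 1 := by linarith
    have hbound := gamma_convex_bound hβ0 hβ1 hy2
    have hmono : Real.Gamma (y + β) ≤ Real.Gamma (a + y) := by
      rcases eq_or_lt_of_le hβa with h | h
      · rw [← h, add_comm]
      · exact le_of_lt (Real.Gamma_strictMonoOn_Ici
          (Set.mem_Ici.mpr (by linarith)) (Set.mem_Ici.mpr (by linarith)) (by linarith))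
    have hGaypos : 0 < Real.Gamma (a + y) := Real.Gamma_pos_of_pos (by linarith)
    have hrp : 0 < (y + β - 1) ^ β := Real.rpow_pos_of_pos hyb1 β
    have key : Real.Gamma y ≤ Real.Gamma (a + y) / (y + β - 1) ^ β := by
      rw [le_div_iff₀ hrp]
      exact hbound.trans hmono
    calc betaFn a y = Real.Gamma a * Real.Gamma y / Real.Gamma (a + y) := rfl
      _ ≤ Real.Gamma a * (Real.Gamma (a + y) / (y + β - 1) ^ β) / Real.Gamma (a + y) := by
          gcongr
      _ = Real.Gamma a * ((y + β - 1) ^ β)⁻¹ := by field_simp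

theorem poisson_rate_new_dishes_antitone_sum (α κ γ : ℝ) (hα : 0 < α) (hκ : 0 ≤ κ)
    (hγ : 0 < γ) :
    StrictAntiOn (fun j : ℕ => γ * betaFn (α + 1) (κ + (j : ℝ)) / betaFn α (κ + 1))
      (Set.Ici 1) ∧
    Tendsto (fun j : ℕ => γ * betaFn (α + 1) (κ + (j : ℝ)) / betaFn α (κ + 1)) atTop (𝓝 0) ∧
    ∑' j : ℕ, γ * betaFn (α + 1) (κ + ((j : ℝ) + 1)) / betaFn α (κ + 1) = γ := by
  have hα1 : (0:ℝ) < α + 1 := by linarith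
  have hκ1 : (0:ℝ) < κ + 1 := by linarith
  have hB : 0 < betaFn α (κ + 1) := betaFn_pos hα hκ1
  -- strict decrease of j ↦ betaFn (α+1) (κ+j) on naturals ≥ 1
  have hdec : ∀ m n : ℕ, 1 ≤ m → m < n →
      betaFn (α + 1) (κ + (n : ℝ)) < betaFn (α + 1) (κ + (m : ℝ)) := by
    intro m n hm hmn
    induction n, hmn using Nat.le_induction with
    | base =>
      have hpos : (0:ℝ) < κ + m := by
        have : (1:ℝ) ≤ (m:ℝ) := by exact_mod_cast hm
        linarith
      have := betaFn_step_lt hα1 hpos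
      push_cast
      rw [show κ + ((m:ℝ) + 1) = (κ + m) + 1 by ring]
      exact this
    | succ n hn ih =>
      have hpos : (0:ℝ) < κ + n := by
        have : (1:ℝ) ≤ (n:ℝ) := by
          exact_mod_cast le_trans hm (le_of_lt hn)
        linarith
      have step := betaFn_step_lt hα1 hpos
      push_cast
      rw [show κ + ((n:ℝ) + 1) = (κ + n) + 1 by ring]
      exact lt_trans step ih
  refine ⟨?_, ?_, ?_⟩
  · intro j hj k _ hjk
    have h := hdec j k hj hjk
    simp only
    gcongr
  · -- tendsto 0
    have hf : Tendsto (fun n : ℕ => betaFn α (κ + n)) atTop (𝓝 0) :=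
      beta_tendsto_zero hα hκ
    have hf1 : Tendsto (fun n : ℕ => betaFn α (κ + (n + 1 : ℕ))) atTop (𝓝 0) :=
      hf.comp (tendsto_add_atTop_nat 1)
    have hmain : Tendsto (fun j : ℕ =>
        γ / betaFn α (κ + 1) * (betaFn α (κ + j) - betaFn α (κ + (j + 1 : ℕ))))
        atTop (𝓝 0) := by
      have := (hf.sub hf1).const_mul (γ / betaFn α (κ + 1))
      simpa using this
    apply hmain.congr'
    filter_upwards [eventually_ge_atTop 1] with j hj
    have hpos : (0:ℝ) < κ + j := by
      have : (1:ℝ) ≤ (j:ℝ) := by exact_mod_cast hj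
      linarith
    have hsplit := betaFn_split hα hpos
    have hc : betaFn α (κ + ((j + 1 : ℕ) : ℝ)) = betaFn α ((κ + j) + 1) := by
      push_cast; ring_nf
    rw [hc, ← hsplit]
    field_simp
  · -- sum equals γ
    have hf : Tendsto (fun n : ℕ => betaFn α (κ + n)) atTop (𝓝 0) :=
      beta_tendsto_zero hα hκ
    set c := γ / betaFn α (κ + 1) with hc
    set g : ℕ → ℝ := fun j => c * betaFn α (κ + ((j + 1 : ℕ) : ℝ)) with hg
    have hg0 : g 0 = γ := by
      rw [hg]
      simp only [Nat.zero_add, Nat.cast_one, hc]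
      field_simp
    have hterm : ∀ j : ℕ, γ * betaFn (α + 1) (κ + ((j : ℝ) + 1)) / betaFn α (κ + 1) =
        g j - g (j + 1) := by
      intro j
      have hpos : (0:ℝ) < κ + ((j:ℝ) + 1) := by positivity
      have hsplit := betaFn_split hα hpos
      rw [hg]
      simp only
      push_cast
      rw [show κ + ((j:ℝ) + 1 + 1) = (κ + ((j:ℝ) + 1)) + 1 by ring, ← mul_sub, ← hsplit, hc]
      field_simp
    have hnonneg : ∀ j : ℕ, 0 ≤ γ * betaFn (α + 1) (κ + ((j : ℝ) + 1)) / betaFn α (κ + 1) := by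
      intro j
      have h1 : 0 < betaFn (α + 1) (κ + ((j:ℝ) + 1)) := betaFn_pos hα1 (by positivity)
      positivity
    have hps : ∀ n : ℕ, ∑ j ∈ Finset.range n,
        γ * betaFn (α + 1) (κ + ((j : ℝ) + 1)) / betaFn α (κ + 1) = g 0 - g n := by
      intro n
      rw [← Finset.sum_range_sub' g n]
      exact Finset.sum_congr rfl fun j _ => hterm j
    have hgl : Tendsto g atTop (𝓝 0) := by
      have h2 := (hf.comp (tendsto_add_atTop_nat 1)).const_mul c
      rw [hg]
      simpa using h2
    have hlim : Tendsto (fun n : ℕ => g 0 - g n) atTop (𝓝 γ) := by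
      have := (tendsto_const_nhds : Tendsto (fun _ : ℕ => g 0) atTop (𝓝 (g 0))).sub hgl
      rw [sub_zero] at this
      rw [← hg0]
      exact this
    have hsum : HasSum (fun j : ℕ => γ * betaFn (α + 1) (κ + ((j : ℝ) + 1)) / betaFn α (κ + 1))
        γ := by
      rw [hasSum_iff_tendsto_nat_of_nonneg hnonneg]
      exact hlim.congr fun n => (hps n).symm
    exact hsum.tsum_eq
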